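/- arXiv:0904.3778 — 7 statements merged into one kernel-verified Lean document; each statement's English description precedes it below -/
import Mathlib

section
/- Let (a_i) be a bounded real sequence and ζ₀ < ζ₁ < ... a strictly increasing sequence of naturals with ζ₀ = 0 and gaps ζ_{n+1} − ζₙ ≤ N. Suppose the density d = lim_{n→∞} (1/n) Σ_{i=0}^{n-1} ξ_i exists and is positive, where ξ_i is the indicator of the range of ζ, and suppose lim_{n→∞} (1/n) Σ_{i=0}^{n-1} ξ_i a_i exists and equals L. Then lim_{m→∞} (1/m) Σ_{j=0}^{m-1} a_{ζ_j} exists and equals L / d. -/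
/-!
Along the times `n = ζ m`, the partial sums `∑_{i<n} ξ i a i` and `∑_{i<n} ξ i` are exactly
`∑_{j<m} a (ζ j)` and `m`. Since `ζ m → ∞`, dividing by `ζ m` these tend to `L` and `d`, and their
quotient, the subsequence average, tends to `L / d`.
-/

open Filter Finset
open scoped Classical

theorem StrictMono.sum_range_indicator_range {M : Type*} [AddCommMonoid M] {ζ : ℕ → ℕ}
    (hζ : StrictMono ζ) (f : ℕ → M) (m : ℕ) :
    ∑ i ∈ range (ζ m), (Set.range ζ).indicator f i = ∑ j ∈ range m, f (ζ j) := by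
  have hfilter : {i ∈ range (ζ m) | i ∈ Set.range ζ} = (range m).map ⟨ζ, hζ.injective⟩ := by
    ext i
    simp only [mem_filter, mem_range, Set.mem_range, Finset.mem_map, Function.Embedding.coeFn_mk]
    constructor
    · rintro ⟨hi, j, rfl⟩
      exact ⟨j, hζ.lt_iff_lt.mp hi, rfl⟩
    · rintro ⟨j, hj, rfl⟩
      exact ⟨hζ hj, j, rfl⟩
  simp only [Set.indicator_apply, ← sum_filter, hfilter, sum_map, Function.Embedding.coeFn_mk]

theorem Filter.Tendsto.div_div_cancel_right {α G₀ : Type*} [CommGroupWithZero G₀]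
    [TopologicalSpace G₀] [ContinuousMul G₀] [ContinuousInv₀ G₀]
    {l : Filter α} {A B w : α → G₀} {x y : G₀}
    (hA : Tendsto (fun t => A t / w t) l (nhds x)) (hB : Tendsto (fun t => B t / w t) l (nhds y))
    (hy : y ≠ 0) (hw : ∀ᶠ t in l, w t ≠ 0) :
    Tendsto (fun t => A t / B t) l (nhds (x / y)) :=
  (hA.div hB hy).congr' <| hw.mono fun t ht => div_div_div_cancel_right₀ ht (A t) (B t)

theorem subsequence_cesaro_limit_eq_div_density_general
    (a : ℕ → ℝ)
    (ζ : ℕ → ℕ) (hmono : StrictMono ζ)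
    (ξ : ℕ → ℝ) (hξ : ∀ i, ξ i = if i ∈ Set.range ζ then 1 else 0)
    (d : ℝ) (hdpos : 0 < d)
    (hd : Tendsto (fun n : ℕ => (1 / (n : ℝ)) * ∑ i ∈ Finset.range n, ξ i) atTop (nhds d))
    (L : ℝ)
    (hL : Tendsto (fun n : ℕ => (1 / (n : ℝ)) * ∑ i ∈ Finset.range n, ξ i * a i) atTop (nhds L)) :
    Tendsto (fun m : ℕ => (1 / (m : ℝ)) * ∑ j ∈ Finset.range m, a (ζ j)) atTop (nhds (L / d)) := by
  have hsum (f : ℕ → ℝ) (m : ℕ) : ∑ i ∈ range (ζ m), ξ i * f i = ∑ j ∈ range m, f (ζ j) := by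
    simp only [hξ, ite_mul, one_mul, zero_mul, ← Set.indicator_apply,
      hmono.sum_range_indicator_range]
  have hcount (m : ℕ) : ∑ i ∈ range (ζ m), ξ i = m := by simpa using hsum (fun _ => 1) m
  have hζ := hmono.tendsto_atTop
  have hnum := hL.comp hζ
  have hden := hd.comp hζ
  simp only [Function.comp_def, one_div_mul_eq_div, hsum, hcount] at hnum hden ⊢
  exact hnum.div_div_cancel_right hden hdpos.ne' <|
    (hζ.eventually_ne_atTop 0).mono fun m hm => Nat.cast_ne_zero.mpr hm

theorem subsequence_cesaro_limit_eq_div_density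
    (N : ℕ) (a : ℕ → ℝ) (C : ℝ) (hbd : ∀ i, |a i| ≤ C)
    (ζ : ℕ → ℕ) (hmono : StrictMono ζ) (hζ0 : ζ 0 = 0)
    (hgap : ∀ n, ζ (n + 1) - ζ n ≤ N)
    (ξ : ℕ → ℝ) (hξ : ∀ i, ξ i = if i ∈ Set.range ζ then 1 else 0)
    (d : ℝ) (hdpos : 0 < d)
    (hd : Tendsto (fun n : ℕ => (1 / (n : ℝ)) * ∑ i ∈ Finset.range n, ξ i) atTop (nhds d))
    (L : ℝ)
    (hL : Tendsto (fun n : ℕ => (1 / (n : ℝ)) * ∑ i ∈ Finset.range n, ξ i * a i) atTop (nhds L)) :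
    Tendsto (fun m : ℕ => (1 / (m : ℝ)) * ∑ j ∈ Finset.range m, a (ζ j)) atTop (nhds (L / d)) :=
  subsequence_cesaro_limit_eq_div_density_general a ζ hmono ξ hξ d hdpos hd L hL
end

section
/- Let (X, 𝓕, μ) be a probability space and T : X → X measurable. If μ is T-AMS, then the set function \bar{μ}(A) := lim_{n→∞} (1/n) Σ_{i=0}^{n-1} μ(T^{-i}A) is a probability measure on (X, 𝓕) and is T-stationary, i.e., \bar{μ}(T^{-1}A) = \bar{μ}(A) for all A ∈ 𝓕. -/
/-!
The Cesàro averages `νₙ = (1/n) ∑_{i<n} μ ∘ T^{-i}` are finite measures converging setwise, so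
by the Nikodym convergence theorem the limit is again a measure. For that theorem, dominate all
`νₙ` by a single finite measure `ρ`: each `A ↦ νₙ(A)` is then Lipschitz on the complete metric
space of measurable sets with distance `ρ(A ∆ B)`, and Baire's theorem makes the `νₙ` eventually
uniformly absolutely continuous with respect to `ρ`. Hence the limit is continuous at `∅`, i.e.
countably additive. Stationarity holds because `νₙ(T⁻¹A) - νₙ(A) = (μ(T^{-n}A) - μ(A)) / n`.
-/

open MeasureTheory Filter Finset
open scoped ENNReal NNReal symmDiff Topology Function

lemma Set.symmDiff_limsup_subset_iUnion_symmDiff {X : Type*} (u : ℕ → Set X) (m : ℕ) :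
    u m ∆ limsup u atTop ⊆ ⋃ k, u (m + k) ∆ u (m + k + 1) := by
  intro x hx
  by_contra hx'
  simp only [Set.mem_iUnion, not_exists, Set.mem_symmDiff, not_or, not_and, not_not] at hx'
  have hconst : ∀ k, x ∈ u (m + k) ↔ x ∈ u m := by
    intro k
    induction k with
    | zero => rfl
    | succ k ih => exact ⟨fun h => ih.1 ((hx' k).2 h), fun h => (hx' k).1 (ih.2 h)⟩
  have hlim : x ∈ limsup u atTop ↔ x ∈ u m := by
    rw [mem_limsup_iff_frequently_mem, ← frequently_const (f := (atTop : Filter ℕ)) (p := x ∈ u m)]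
    refine frequently_congr ?_
    filter_upwards [eventually_ge_atTop m] with n hn
    simpa [Nat.add_sub_cancel' hn] using hconst (n - m)
  rw [Set.mem_symmDiff, hlim] at hx
  tauto

namespace MeasureTheory.MeasuredSets

variable {X : Type*} [MeasurableSpace X] {ρ : Measure X}

instance : CompleteSpace (MeasuredSets ρ) := by
  refine EMetric.complete_of_convergent_controlled_sequences (fun n => 2⁻¹ ^ n)
    (fun n => ENNReal.pow_pos (by norm_num) n) fun u hu => ?_
  let A : MeasuredSets ρ :=
    ⟨limsup (fun n => (u n : Set X)) atTop, MeasurableSet.measurableSet_limsup fun n => (u n).2⟩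
  refine ⟨A, ?_⟩
  have hbound : ∀ m, edist (u m) A ≤ 2 * 2⁻¹ ^ m := by
    intro m
    calc ρ ((u m : Set X) ∆ limsup (fun n => (u n : Set X)) atTop)
        ≤ ∑' k, ρ ((u (m + k) : Set X) ∆ u (m + k + 1)) :=
          (measure_mono (Set.symmDiff_limsup_subset_iUnion_symmDiff
            (fun n => (u n : Set X)) m)).trans (measure_iUnion_le _)
      _ ≤ ∑' k, 2⁻¹ ^ m * 2⁻¹ ^ k := by
          gcongr with k
          rw [← pow_add]
          exact (hu _ _ _ le_rfl (Nat.le_succ _)).le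
      _ = 2 * 2⁻¹ ^ m := by
          rw [ENNReal.tsum_mul_left, ENNReal.tsum_geometric, ENNReal.one_sub_inv_two, inv_inv,
            mul_comm]
  have hlim : Tendsto (fun m : ℕ => (2 : ℝ≥0∞) * 2⁻¹ ^ m) atTop (𝓝 0) := by
    simpa using ENNReal.Tendsto.const_mul
      (ENNReal.tendsto_pow_atTop_nhds_zero_of_lt_one (by norm_num : (2⁻¹ : ℝ≥0∞) < 1))
      (Or.inr ENNReal.ofNat_ne_top)
  exact tendsto_iff_edist_tendsto_0.2 <|
    tendsto_of_tendsto_of_tendsto_of_le_of_le tendsto_const_nhds hlim (fun _ => zero_le) hbound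

end MeasureTheory.MeasuredSets

theorem exists_isOpen_forall_dist_le_of_cauchySeq {M E : Type*} [TopologicalSpace M]
    [BaireSpace M] [Nonempty M] [PseudoMetricSpace E] {g : ℕ → M → E}
    (hg : ∀ n, Continuous (g n)) (hcauchy : ∀ x, CauchySeq fun n => g n x) {ε : ℝ} (hε : 0 < ε) :
    ∃ m, ∃ U : Set M, IsOpen U ∧ U.Nonempty ∧ ∀ x ∈ U, ∀ n ≥ m, dist (g n x) (g m x) ≤ ε := by
  let F m := {x | ∀ n ≥ m, dist (g n x) (g m x) ≤ ε}
  have hclosed : ∀ m, IsClosed (F m) := fun m => by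
    simp only [F, Set.ofPred_forall]
    exact isClosed_iInter fun n => isClosed_iInter fun _ =>
      isClosed_le ((hg n).dist (hg m)) continuous_const
  have hcover : ⋃ m, F m = Set.univ := Set.eq_univ_of_forall fun x => by
    obtain ⟨m, hm⟩ := Metric.cauchySeq_iff'.1 (hcauchy x) ε hε
    exact Set.mem_iUnion.2 ⟨m, fun n hn => (hm n hn).le⟩
  obtain ⟨m, hm⟩ := nonempty_interior_of_iUnion_of_closed hclosed hcover
  exact ⟨m, interior (F m), isOpen_interior, hm, fun x hx => interior_subset hx⟩

namespace MeasureTheory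

variable {X : Type*} [MeasurableSpace X] {ρ : Measure X}

lemma measureReal_le_mul_of_le_smul [IsFiniteMeasure ρ] {ν : Measure X} {c : ℝ≥0}
    (h : ν ≤ c • ρ) (s : Set X) : ν.real s ≤ c * ρ.real s := by
  rw [← measureReal_nnreal_smul_apply]
  exact ENNReal.toReal_mono (by finiteness) (h s)

lemma MeasuredSets.lipschitzWith_measureReal_of_le_smul [IsFiniteMeasure ρ] {ν : Measure X}
    {c : ℝ≥0} (h : ν ≤ c • ρ) : LipschitzWith c fun s : MeasuredSets ρ => ν.real s := by
  have := isFiniteMeasure_of_le _ h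
  refine LipschitzWith.of_le_add_mul c fun s t => ?_
  calc ν.real s ≤ ν.real t + ν.real ((s : Set X) \ t) := sub_le_iff_le_add'.1 le_measureReal_sdiff
    _ ≤ ν.real t + c * dist s t := by
        have hsub : (s : Set X) \ t ⊆ (s : Set X) ∆ t := le_sup_left
        rw [MeasuredSets.dist_def]
        gcongr _ + ?_
        exact (measureReal_mono hsub).trans (measureReal_le_mul_of_le_smul h _)

lemma isSetRing_measurableSet : IsSetRing {s : Set X | MeasurableSet s} :=
  ⟨.empty, fun _ _ hs ht => hs.union ht, fun _ _ hs ht => hs.diff ht⟩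

theorem exists_measure_of_additive_of_tendsto_zero {L : Set X → ℝ}
    (hnonneg : ∀ s, MeasurableSet s → 0 ≤ L s)
    (hadd : ∀ s t, MeasurableSet s → MeasurableSet t → Disjoint s t → L (s ∪ t) = L s + L t)
    (hcont : ∀ s : ℕ → Set X, (∀ k, MeasurableSet (s k)) → Antitone s → ⋂ k, s k = ∅ →
      Tendsto (fun k => L (s k)) atTop (𝓝 0)) :
    ∃ μ : Measure X, IsFiniteMeasure μ ∧ ∀ s, MeasurableSet s → μ.real s = L s := by
  have hempty : L ∅ = 0 := by
    simpa using hadd ∅ ∅ .empty .empty (Set.disjoint_empty _)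
  let m : AddContent ℝ≥0∞ {s : Set X | MeasurableSet s} :=
    isSetRing_measurableSet.addContent_of_union (fun s => ENNReal.ofReal (L s))
      (by simp [hempty]) fun hs ht hst => by
        rw [hadd _ _ hs ht hst, ENNReal.ofReal_add (hnonneg _ hs) (hnonneg _ ht)]
  have hσ : ∀ ⦃f : ℕ → Set X⦄ (hf : ∀ i, MeasurableSet (f i)), Pairwise (Disjoint on f) →
      m (⋃ i, f i) = ∑' i, m (f i) := fun f hf hdisj =>
    addContent_iUnion_eq_sum_of_tendsto_zero isSetRing_measurableSet m
      (fun _ _ => ENNReal.ofReal_ne_top)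
      (fun s hs hanti hempty => by
        have := ENNReal.tendsto_ofReal (hcont s hs hanti hempty)
        rwa [ENNReal.ofReal_zero] at this)
      hf (MeasurableSet.iUnion hf) hdisj
  let μ := Measure.ofMeasurable (fun s _ => m s) (by simp [m]) hσ
  have hμ : ∀ s, MeasurableSet s → μ s = ENNReal.ofReal (L s) := fun s hs =>
    Measure.ofMeasurable_apply s hs
  refine ⟨μ, ⟨by simp [hμ]⟩, fun s hs => ?_⟩
  rw [measureReal_def, hμ s hs, ENNReal.toReal_ofReal (hnonneg s hs)]

lemma tendsto_measureReal_zero_of_antitone {μ : Measure X} [IsFiniteMeasure μ] {s : ℕ → Set X}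
    (hs : ∀ k, MeasurableSet (s k)) (hanti : Antitone s) (hempty : ⋂ k, s k = ∅) :
    Tendsto (fun k => μ.real (s k)) atTop (𝓝 0) := by
  have := tendsto_measure_iInter_atTop (μ := μ) (fun k => (hs k).nullMeasurableSet) hanti
    ⟨0, measure_ne_top _ _⟩
  rw [hempty, measure_empty] at this
  exact (ENNReal.tendsto_toReal ENNReal.zero_ne_top).comp this

section VitaliHahnSaks

variable [IsFiniteMeasure ρ] {ν : ℕ → Measure X}

theorem exists_pos_forall_dist_measureReal_le_of_le_smul (hdom : ∀ n, ∃ c : ℝ≥0, ν n ≤ c • ρ)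
    (hlim : ∀ A, MeasurableSet A → ∃ L, Tendsto (fun n => (ν n).real A) atTop (𝓝 L))
    {ε : ℝ} (hε : 0 < ε) :
    ∃ δ > 0, ∃ m, ∀ B, MeasurableSet B → ρ.real B < δ →
      ∀ n ≥ m, dist ((ν n).real B) ((ν m).real B) ≤ ε := by
  choose c hc using hdom
  have := fun n => isFiniteMeasure_of_le _ (hc n)
  have : Nonempty (MeasuredSets ρ) := ⟨⟨∅, .empty⟩⟩
  obtain ⟨m, U, hU, ⟨A, hA⟩, hclose⟩ := exists_isOpen_forall_dist_le_of_cauchySeq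
    (g := fun n (s : MeasuredSets ρ) => (ν n).real s)
    (fun n => (MeasuredSets.lipschitzWith_measureReal_of_le_smul (hc n)).continuous)
    (fun s => (hlim s s.2).choose_spec.cauchySeq) (half_pos hε)
  obtain ⟨δ, hδ, hball⟩ := Metric.isOpen_iff.1 hU A hA
  refine ⟨δ, hδ, m, fun B hB hBδ n hn => ?_⟩
  -- `B` is the difference of two sets close to `A`, on which the `ν n` are uniformly Cauchy
  have hnear : ∀ s : MeasuredSets ρ, (s : Set X) ∆ A ⊆ B → s ∈ U := fun s hs =>
    hball <| Metric.mem_ball.2 <| (measureReal_mono hs).trans_lt hBδ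
  let S : MeasuredSets ρ := ⟨A ∪ B, A.2.union hB⟩
  let D : MeasuredSets ρ := ⟨A \ B, A.2.diff hB⟩
  have hS : S ∈ U := hnear S (show ((A : Set X) ∪ B) ∆ A ⊆ B by
    intro x; simp only [Set.mem_symmDiff, Set.mem_union]; tauto)
  have hD : D ∈ U := hnear D (show ((A : Set X) \ B) ∆ A ⊆ B by
    intro x; simp only [Set.mem_symmDiff, Set.mem_sdiff]; tauto)
  have hsplit : ∀ k, (ν k).real B = (ν k).real S - (ν k).real D := fun k => by
    rw [eq_sub_iff_add_eq']
    change (ν k).real ((A : Set X) \ B) + (ν k).real B = (ν k).real (A ∪ B)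
    rw [← measureReal_union Set.disjoint_sdiff_left hB, Set.sdiff_union_self]
  calc dist ((ν n).real B) ((ν m).real B)
      ≤ dist ((ν n).real S) ((ν m).real S) + dist ((ν n).real D) ((ν m).real D) := by
        rw [hsplit n, hsplit m]; exact dist_sub_sub_le _ _ _ _
    _ ≤ ε / 2 + ε / 2 := add_le_add (hclose S hS n hn) (hclose D hD n hn)
    _ = ε := add_halves ε

theorem tendsto_zero_of_tendsto_measureReal_of_antitone (hdom : ∀ n, ∃ c : ℝ≥0, ν n ≤ c • ρ)
    {L : Set X → ℝ} (hL : ∀ A, MeasurableSet A → Tendsto (fun n => (ν n).real A) atTop (𝓝 (L A)))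
    {s : ℕ → Set X} (hs : ∀ k, MeasurableSet (s k)) (hanti : Antitone s) (hempty : ⋂ k, s k = ∅) :
    Tendsto (fun k => L (s k)) atTop (𝓝 0) := by
  have := fun n => isFiniteMeasure_of_le _ (hdom n).choose_spec
  rw [Metric.tendsto_atTop]
  intro ε hε
  obtain ⟨δ, hδ, m, hclose⟩ := exists_pos_forall_dist_measureReal_le_of_le_smul hdom
    (fun A hA => ⟨L A, hL A hA⟩) (half_pos hε)
  obtain ⟨K, hK⟩ := eventually_atTop.1
    (((tendsto_measureReal_zero_of_antitone (μ := ρ) hs hanti hempty).eventually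
        (gt_mem_nhds hδ)).and
      ((tendsto_measureReal_zero_of_antitone (μ := ν m) hs hanti hempty).eventually
        (gt_mem_nhds (half_pos hε))))
  refine ⟨K, fun k hk => ?_⟩
  have hle : L (s k) ≤ (ν m).real (s k) + ε / 2 := by
    refine le_of_tendsto (hL _ (hs k)) (eventually_atTop.2 ⟨m, fun n hn => ?_⟩)
    linarith [Real.sub_le_dist ((ν n).real (s k)) ((ν m).real (s k)),
      hclose _ (hs k) (hK k hk).1 n hn]
  have h0 : 0 ≤ L (s k) := ge_of_tendsto' (hL _ (hs k)) fun n => measureReal_nonneg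
  rw [Real.dist_eq, sub_zero, abs_of_nonneg h0]
  linarith [(hK k hk).2]

theorem exists_measure_tendsto_measureReal_of_le_smul (hdom : ∀ n, ∃ c : ℝ≥0, ν n ≤ c • ρ)
    (hlim : ∀ A, MeasurableSet A → ∃ L, Tendsto (fun n => (ν n).real A) atTop (𝓝 L)) :
    ∃ μ : Measure X, IsFiniteMeasure μ ∧
      ∀ A, MeasurableSet A → Tendsto (fun n => (ν n).real A) atTop (𝓝 (μ.real A)) := by
  have := fun n => isFiniteMeasure_of_le _ (hdom n).choose_spec
  let L A := limUnder atTop fun n => (ν n).real A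
  have hL : ∀ A, MeasurableSet A → Tendsto (fun n => (ν n).real A) atTop (𝓝 (L A)) :=
    fun A hA => tendsto_nhds_limUnder (hlim A hA)
  obtain ⟨μ, hμfin, hμ⟩ := exists_measure_of_additive_of_tendsto_zero (L := L)
    (fun A hA => ge_of_tendsto' (hL A hA) fun n => measureReal_nonneg)
    (fun s t hs ht hst => by
      have hadd : ∀ n, (ν n).real (s ∪ t) = (ν n).real s + (ν n).real t := fun n =>
        measureReal_union hst ht
      exact tendsto_nhds_unique (hL _ (hs.union ht)) <| by
        simpa only [hadd] using (hL s hs).add (hL t ht))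
    (fun s hs => tendsto_zero_of_tendsto_measureReal_of_antitone hdom hL hs)
  exact ⟨μ, hμfin, fun A hA => (hμ A hA).symm ▸ hL A hA⟩

end VitaliHahnSaks

lemma exists_isFiniteMeasure_forall_le_smul {ν : ℕ → Measure X} {M : ℝ≥0∞} (hM : M ≠ ∞)
    (hν : ∀ n, ν n Set.univ ≤ M) :
    ∃ ρ : Measure X, IsFiniteMeasure ρ ∧ ∀ n, ∃ c : ℝ≥0, ν n ≤ c • ρ := by
  let ρ := Measure.sum fun n => (2⁻¹ : ℝ≥0∞) ^ (n + 1) • ν n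
  refine ⟨ρ, ⟨?_⟩, fun n => ⟨2 ^ (n + 1), fun s => ?_⟩⟩
  · calc ρ Set.univ = ∑' n, (2⁻¹ : ℝ≥0∞) ^ (n + 1) * ν n Set.univ := by
          simp [ρ, Measure.sum_apply _ MeasurableSet.univ]
      _ ≤ ∑' n, (2⁻¹ : ℝ≥0∞) ^ (n + 1) * M := by gcongr with n; exact hν n
      _ = M := by
          rw [ENNReal.tsum_mul_right, ENNReal.tsum_geometric_add_one, ENNReal.one_sub_inv_two,
            inv_inv, ENNReal.inv_mul_cancel (by norm_num) (by norm_num), one_mul]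
      _ < ∞ := hM.lt_top
  · calc ν n s = 2 ^ (n + 1) * ((2⁻¹ : ℝ≥0∞) ^ (n + 1) * ν n s) := by
          rw [← mul_assoc, ← mul_pow, ENNReal.mul_inv_cancel (by norm_num) (by norm_num), one_pow,
            one_mul]
      _ ≤ 2 ^ (n + 1) * ρ s := by
          gcongr
          exact Measure.le_sum (fun n => (2⁻¹ : ℝ≥0∞) ^ (n + 1) • ν n) n s
      _ = ((2 ^ (n + 1) : ℝ≥0) • ρ) s := by simp [Measure.nnreal_smul_coe_apply]

theorem exists_measure_tendsto_measureReal {ν : ℕ → Measure X} [∀ n, IsFiniteMeasure (ν n)]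
    (hlim : ∀ A, MeasurableSet A → ∃ L, Tendsto (fun n => (ν n).real A) atTop (𝓝 L)) :
    ∃ μ : Measure X, IsFiniteMeasure μ ∧
      ∀ A, MeasurableSet A → Tendsto (fun n => (ν n).real A) atTop (𝓝 (μ.real A)) := by
  obtain ⟨M, hM⟩ := (hlim _ .univ).choose_spec.bddAbove_range
  obtain ⟨ρ, hρ, hdom⟩ := exists_isFiniteMeasure_forall_le_smul (M := ENNReal.ofReal M)
    ENNReal.ofReal_ne_top fun n => by
      rw [← ofReal_measureReal (μ := ν n)]
      exact ENNReal.ofReal_le_ofReal (hM ⟨n, rfl⟩)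
  exact exists_measure_tendsto_measureReal_of_le_smul hdom hlim

noncomputable def Measure.birkhoffAverageMap (μ : Measure X) (T : X → X) (n : ℕ) : Measure X :=
  (n : ℝ≥0)⁻¹ • ∑ i ∈ range n, μ.map T^[i]

instance {μ : Measure X} [IsFiniteMeasure μ] {T : X → X} {n : ℕ} :
    IsFiniteMeasure (μ.birkhoffAverageMap T n) := by
  unfold Measure.birkhoffAverageMap; infer_instance

lemma Measure.measureReal_birkhoffAverageMap {μ : Measure X} [IsFiniteMeasure μ] {T : X → X}
    (hT : Measurable T) (n : ℕ) {A : Set X} (hA : MeasurableSet A) :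
    (μ.birkhoffAverageMap T n).real A = birkhoffAverage ℝ (Set.preimage T) μ.real n A := by
  rw [Measure.birkhoffAverageMap, measureReal_nnreal_smul_apply, measureReal_def,
    Measure.coe_finsetSum, Finset.sum_apply, ENNReal.toReal_sum (fun i _ => measure_ne_top _ _)]
  simp [birkhoffAverage, birkhoffSum, ← Set.preimage_iterate_eq,
    Measure.map_apply (hT.iterate _) hA, measureReal_def]

lemma birkhoffAverage_preimage_measureReal (μ : Measure X) (T : X → X) (n : ℕ) (A : Set X) :
    birkhoffAverage ℝ (Set.preimage T) μ.real n A =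
      1 / n * ∑ i ∈ range n, (μ (T^[i] ⁻¹' A)).toReal := by
  simp [birkhoffAverage, birkhoffSum, ← Set.preimage_iterate_eq, measureReal_def]

end MeasureTheory

open MeasureTheory

theorem stationary_mean_is_stationary_probability_measure
    {X : Type*} [MeasurableSpace X] (μ : Measure X) [IsProbabilityMeasure μ]
    (T : X → X) (hT : Measurable T)
    (hAMS : ∀ A : Set X, MeasurableSet A → ∃ L : ℝ,
      Tendsto (fun n : ℕ => (1 / (n : ℝ)) * ∑ i ∈ Finset.range n, (μ (T^[i] ⁻¹' A)).toReal)
        atTop (nhds L)) :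
    ∃ ν : Measure X, IsProbabilityMeasure ν ∧
      (∀ A : Set X, MeasurableSet A →
        Tendsto (fun n : ℕ => (1 / (n : ℝ)) * ∑ i ∈ Finset.range n, (μ (T^[i] ⁻¹' A)).toReal)
          atTop (nhds (ν A).toReal)) ∧
      (∀ A : Set X, MeasurableSet A → ν (T ⁻¹' A) = ν A) := by
  simp only [← birkhoffAverage_preimage_measureReal] at hAMS ⊢
  obtain ⟨ν, hfin, hν⟩ := exists_measure_tendsto_measureReal (ν := μ.birkhoffAverageMap T)
    fun A hA => by simpa only [Measure.measureReal_birkhoffAverageMap hT _ hA] using hAMS A hA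
  have hlim : ∀ A, MeasurableSet A →
      Tendsto (birkhoffAverage ℝ (Set.preimage T) μ.real · A) atTop (𝓝 (ν.real A)) :=
    fun A hA => by simpa only [Measure.measureReal_birkhoffAverageMap hT _ hA] using hν A hA
  refine ⟨ν, ⟨?_⟩, hlim, fun A hA => ?_⟩
  · have hfix : Function.IsFixedPt (Set.preimage T) Set.univ := Set.preimage_univ
    have := tendsto_nhds_unique (hlim _ .univ) (hfix.tendsto_birkhoffAverage ℝ μ.real)
    rw [measureReal_eq_measureReal_iff] at this
    simpa using this
  · have hbdd : Bornology.IsBounded (Set.range μ.real) :=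
      (Metric.isBounded_Icc 0 1).subset <| Set.range_subset_iff.2 fun s =>
        ⟨measureReal_nonneg, measureReal_le_one⟩
    have hshift := (hlim A hA).add
      (tendsto_birkhoffAverage_apply_sub_birkhoffAverage' ℝ hbdd (Set.preimage T) A)
    have := tendsto_nhds_unique (hlim _ (hA.preimage hT)) (by simpa using hshift)
    rwa [measureReal_eq_measureReal_iff] at this
end

section
/- Let (X, 𝓕, μ) be a probability space, T : X → X measure-preserving with respect to a stationary measure m, and suppose μ ≪ m. Then μ is T-AMS: the limits lim_{n→∞} (1/n) Σ_{i=0}^{n-1} μ(T^{-i}A) exist for all A ∈ 𝓕. -/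
/-!
Write `f = dμ/dm ∈ L¹(m)`, so that `μ (T^[i] ⁻¹' A) = ∫_{T^[i] ⁻¹' A} f dm`. For `f` replaced by a
truncation `min f k ∈ L²(m)`, this integral is the inner product of `min f k` with the `i`-th
Koopman iterate of `𝟙_A`, whose Cesàro means converge by von Neumann's mean ergodic theorem.
Truncating changes every term, hence every Cesàro mean, by at most `‖f - min f k‖₁ → 0`, so the
Cesàro means of `μ (T^[i] ⁻¹' A)` are a uniform limit of convergent sequences.
-/

open MeasureTheory Filter Finset
open scoped Topology ENNReal

theorem TendstoUniformly.cauchySeq {ι κ β : Type*} [PseudoMetricSpace β] [Nonempty κ]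
    [SemilatticeSup κ] {F : ι → κ → β} {f : κ → β} {p : Filter ι} [p.NeBot]
    (hF : TendstoUniformly F f p) (hFi : ∀ i, CauchySeq (F i)) : CauchySeq f := by
  refine Metric.cauchySeq_iff'.2 fun δ hδ => ?_
  obtain ⟨i, hi⟩ := (Metric.tendstoUniformly_iff.1 hF (δ / 3) (by positivity)).exists
  obtain ⟨N, hN⟩ := Metric.cauchySeq_iff'.1 (hFi i) (δ / 3) (by positivity)
  refine ⟨N, fun n hn => ?_⟩
  calc dist (f n) (f N) ≤ dist (f n) (F i n) + dist (F i n) (F i N) + dist (F i N) (f N) :=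
        dist_triangle4 _ _ _ _
    _ < δ / 3 + δ / 3 + δ / 3 := by
        gcongr
        · exact hi n
        · exact hN n hn
        · exact dist_comm (f N) _ ▸ hi N
    _ = δ := by ring

theorem tendstoUniformly_cesaro_of_abs_sub_le {ι : Type*} {p : Filter ι} {u : ι → ℕ → ℝ}
    {v : ℕ → ℝ} {ε : ι → ℝ} (hε : Tendsto ε p (𝓝 0)) (huv : ∀ k i, |v i - u k i| ≤ ε k) :
    TendstoUniformly (fun k (n : ℕ) => (1 / (n : ℝ)) * ∑ i ∈ range n, u k i)
      (fun n => (1 / (n : ℝ)) * ∑ i ∈ range n, v i) p := by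
  refine Metric.tendstoUniformly_iff.2 fun δ hδ => ?_
  filter_upwards [hε.eventually (gt_mem_nhds hδ)] with k hk n
  refine lt_of_le_of_lt ?_ hk
  rcases n.eq_zero_or_pos with rfl | hn
  · simpa using (abs_nonneg _).trans (huv k 0)
  rw [Real.dist_eq, ← mul_sub, ← sum_sub_distrib, abs_mul, abs_of_pos (by positivity)]
  calc 1 / (n : ℝ) * |∑ i ∈ range n, (v i - u k i)|
      ≤ 1 / (n : ℝ) * ∑ _i ∈ range n, ε k := by
        gcongr
        exact (abs_sum_le_sum_abs _ _).trans (sum_le_sum fun i _ => huv k i)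
    _ = ε k := by
        rw [sum_const, card_range, nsmul_eq_mul]
        field_simp

section Truncation

variable {X : Type*} [MeasurableSpace X] {m : Measure X} {f g : X → ℝ}

theorem abs_setIntegral_sub_setIntegral_le (hf : Integrable f m) (hg : Integrable g m)
    (B : Set X) : |∫ x in B, f x ∂m - ∫ x in B, g x ∂m| ≤ ∫ x, |f x - g x| ∂m := by
  rw [← integral_sub hf.integrableOn hg.integrableOn]
  calc |∫ x in B, (f x - g x) ∂m| ≤ ∫ x in B, |f x - g x| ∂m := abs_integral_le_integral_abs
    _ ≤ ∫ x, |f x - g x| ∂m :=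
        setIntegral_le_integral (hf.sub hg).abs (ae_of_all _ fun _ => abs_nonneg _)

theorem MeasureTheory.Integrable.tendsto_integral_abs_sub_min (hf : Integrable f m) :
    Tendsto (fun k : ℕ => ∫ x, |f x - min (f x) k| ∂m) atTop (𝓝 0) := by
  have hbound : ∀ (k : ℕ) x, |f x - min (f x) k| ≤ |f x| := fun k x => by
    rw [abs_of_nonneg (sub_nonneg.2 (min_le_left _ _))]
    rcases min_choice (f x) k with h | h <;> rw [h]
    · simp
    · linarith [le_abs_self (f x), (Nat.cast_nonneg k : (0 : ℝ) ≤ k)]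
  simpa using tendsto_integral_of_dominated_convergence
    (F := fun (k : ℕ) x => |f x - min (f x) k|) (f := fun _ => 0) (fun x => |f x|)
    (fun k => (hf.aestronglyMeasurable.sub
      (hf.aestronglyMeasurable.inf aestronglyMeasurable_const)).norm) hf.abs
    (fun k => ae_of_all _ fun x => by simpa using hbound k x)
    (ae_of_all _ fun x => tendsto_const_nhds.congr' <| by
      filter_upwards [eventually_ge_atTop ⌈f x⌉₊] with k hk
      rw [min_eq_left ((Nat.le_ceil _).trans (by exact_mod_cast hk))]
      simp)

end Truncation

theorem MeasureTheory.MeasurePreserving.exists_tendsto_cesaro_setIntegral_preimage_iterate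
    {X : Type*} [MeasurableSpace X] {m : Measure X} {T : X → X} (hT : MeasurePreserving T m m)
    {A : Set X} (hA : MeasurableSet A) (hmA : m A ≠ ∞) {g : X → ℝ} (hg : MemLp g 2 m) :
    ∃ L : ℝ, Tendsto
      (fun n : ℕ => (1 / (n : ℝ)) * ∑ i ∈ range n, ∫ x in T^[i] ⁻¹' A, g x ∂m) atTop (𝓝 L) := by
  let U : Lp ℝ 2 m →L[ℝ] Lp ℝ 2 m := (Lp.compMeasurePreservingₗᵢ ℝ T hT).toContinuousLinearMap
  let e : Lp ℝ 2 m := indicatorConstLp 2 hA hmA 1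
  have hUe : ∀ i, inner ℝ (U^[i] e) (hg.toLp g) = ∫ x in T^[i] ⁻¹' A, g x ∂m := fun i => by
    have hiter : U^[i] e = Lp.compMeasurePreserving (T^[i]) (hT.iterate i) e :=
      congrFun (Lp.compMeasurePreserving_iterate hT i) e
    rw [hiter, Lp.indicatorConstLp_compMeasurePreserving, L2.inner_indicatorConstLp_one]
    exact setIntegral_congr_ae ((hT.iterate i).measurable hA)
      (hg.coeFn_toLp.mono fun x hx _ => hx)
  have hmean := (U.tendsto_birkhoffAverage_orthogonalProjection
    (LinearIsometry.norm_toContinuousLinearMap_le _) e).inner (𝕜 := ℝ)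
    (tendsto_const_nhds (x := hg.toLp g))
  refine ⟨_, hmean.congr fun n => ?_⟩
  simp only [birkhoffAverage, birkhoffSum, id_eq, real_inner_smul_left, sum_inner, hUe, one_div]

theorem ams_of_absolutely_continuous_wrt_stationary
    {X : Type*} [MeasurableSpace X] (μ m : Measure X)
    [IsProbabilityMeasure μ] [IsProbabilityMeasure m]
    (T : X → X) (hT : Measurable T)
    (hstat : ∀ A : Set X, MeasurableSet A → m (T ⁻¹' A) = m A)
    (hac : μ ≪ m) :
    ∀ A : Set X, MeasurableSet A → ∃ L : ℝ,
      Tendsto (fun n : ℕ => (1 / (n : ℝ)) * ∑ i ∈ Finset.range n, (μ (T^[i] ⁻¹' A)).toReal)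
        atTop (nhds L) := by
  intro A hA
  have hTm : MeasurePreserving T m m :=
    ⟨hT, Measure.ext fun s hs => by rw [Measure.map_apply hT hs, hstat s hs]⟩
  set f : X → ℝ := fun x => (μ.rnDeriv m x).toReal
  have hf : Integrable f m := Measure.integrable_toReal_rnDeriv
  have htrunc : ∀ k : ℕ, MemLp (fun x => min (f x) k) 2 m := fun k =>
    MemLp.of_bound (hf.inf (integrable_const (k : ℝ))).aestronglyMeasurable k
      (ae_of_all _ fun x => by simp [f, abs_of_nonneg])
  have hunif := tendstoUniformly_cesaro_of_abs_sub_le hf.tendsto_integral_abs_sub_min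
    (u := fun (k : ℕ) i => ∫ x in T^[i] ⁻¹' A, min (f x) k ∂m)
    (v := fun i => (μ (T^[i] ⁻¹' A)).toReal) fun k i => by
      rw [← measureReal_def, ← Measure.setIntegral_toReal_rnDeriv hac]
      exact abs_setIntegral_sub_setIntegral_le hf ((htrunc k).integrable one_le_two) _
  exact cauchySeq_tendsto_of_complete <| hunif.cauchySeq fun k =>
    (hTm.exists_tendsto_cesaro_setIntegral_preimage_iterate hA (measure_ne_top m A)
      (htrunc k)).choose_spec.cauchySeq
end

section
/- Let T : X → X and S : Y → Y be measurable, Λ : X → Y measurable with S ∘ Λ = Λ ∘ T, and μ a T-AMS probability measure on X. Define the joint measure ρ on X × Y by ρ(A × B) = μ(A ∩ Λ⁻¹B), extended to the product σ-field. Then ρ is (T × S)-AMS, where (T × S)(x, y) = (T(x), S(y)). -/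
open MeasureTheory Filter Finset

/-! The joint measure is the image of `μ` under the graph map `x ↦ (x, Λ x)`, which
semiconjugates `T` to `T × S`; along such a semiconjugacy `g` the Cesàro averages of the image
measure at `E` are exactly those of `μ` at the single measurable set `g ⁻¹' E`. -/

def IsAsymptoticallyMeanStationary {α : Type*} [MeasurableSpace α] (T : α → α)
    (μ : Measure α) : Prop :=
  ∀ A : Set α, MeasurableSet A → ∃ L : ℝ,
    Tendsto (fun n : ℕ => (1 / (n : ℝ)) * ∑ i ∈ range n, (μ (T^[i] ⁻¹' A)).toReal)
      atTop (nhds L)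

section

variable {α β : Type*} [MeasurableSpace α] [MeasurableSpace β]
  {T : α → α} {T' : β → β} {μ : Measure α} {g : α → β}

theorem MeasureTheory.Measure.map_apply_preimage_iterate_of_semiconj (hg : Measurable g)
    (hT' : Measurable T') (h : Function.Semiconj g T T') (n : ℕ) {E : Set β}
    (hE : MeasurableSet E) :
    μ.map g (T'^[n] ⁻¹' E) = μ (T^[n] ⁻¹' (g ⁻¹' E)) := by
  rw [Measure.map_apply hg (hT'.iterate n hE), ← Set.preimage_comp, ← Set.preimage_comp,
    (h.iterate_right n).comp_eq]

theorem IsAsymptoticallyMeanStationary.map (hμ : IsAsymptoticallyMeanStationary T μ)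
    (hg : Measurable g) (hT' : Measurable T') (h : Function.Semiconj g T T') :
    IsAsymptoticallyMeanStationary T' (μ.map g) := by
  intro E hE
  obtain ⟨L, hL⟩ := hμ (g ⁻¹' E) (hg hE)
  refine ⟨L, ?_⟩
  simpa only [Measure.map_apply_preimage_iterate_of_semiconj hg hT' h _ hE] using hL

end

theorem joint_measure_is_product_ams_general
    {X Y : Type*} [MeasurableSpace X] [MeasurableSpace Y]
    (T : X → X) (hT : Measurable T) (S : Y → Y) (hS : Measurable S)
    (Λ : X → Y) (hΛ : Measurable Λ) (hcomm : ∀ x, S (Λ x) = Λ (T x))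
    (μ : Measure X)
    (hAMS : ∀ A : Set X, MeasurableSet A → ∃ L : ℝ,
      Tendsto (fun n : ℕ => (1 / (n : ℝ)) * ∑ i ∈ Finset.range n, (μ (T^[i] ⁻¹' A)).toReal)
        atTop (nhds L)) :
    ∀ E : Set (X × Y), MeasurableSet E → ∃ L : ℝ,
      Tendsto (fun n : ℕ =>
          (1 / (n : ℝ)) * ∑ i ∈ Finset.range n,
            ((μ.map (fun x => (x, Λ x))) ((Prod.map T S)^[i] ⁻¹' E)).toReal)
        atTop (nhds L) := by
  have hgraph : Function.Semiconj (fun x => (x, Λ x)) T (Prod.map T S) :=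
    fun x => Prod.ext rfl (hcomm x).symm
  exact IsAsymptoticallyMeanStationary.map hAMS (measurable_id.prodMk hΛ) (hT.prodMap hS) hgraph

theorem joint_measure_is_product_ams
    {X Y : Type*} [MeasurableSpace X] [MeasurableSpace Y]
    (T : X → X) (hT : Measurable T) (S : Y → Y) (hS : Measurable S)
    (Λ : X → Y) (hΛ : Measurable Λ) (hcomm : ∀ x, S (Λ x) = Λ (T x))
    (μ : Measure X) [IsProbabilityMeasure μ]
    (hAMS : ∀ A : Set X, MeasurableSet A → ∃ L : ℝ,
      Tendsto (fun n : ℕ => (1 / (n : ℝ)) * ∑ i ∈ Finset.range n, (μ (T^[i] ⁻¹' A)).toReal)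
        atTop (nhds L)) :
    ∀ E : Set (X × Y), MeasurableSet E → ∃ L : ℝ,
      Tendsto (fun n : ℕ =>
          (1 / (n : ℝ)) * ∑ i ∈ Finset.range n,
            ((μ.map (fun x => (x, Λ x))) ((Prod.map T S)^[i] ⁻¹' E)).toReal)
        atTop (nhds L) :=
  joint_measure_is_product_ams_general T hT S hS Λ hΛ hcomm μ hAMS
end

section
/- Let T : X → X be measurable and μ a probability measure on X. Then μ is T-AMS if and only if for every bounded measurable function g : X → ℝ, the limit lim_{n→∞} (1/n) Σ_{i=0}^{n-1} ∫ g(T^i x) dμ(x) exists. -/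
/-!
For `n ≥ 1` the map `g ↦ (1/n) ∑_{i<n} ∫ g ∘ T^[i] dμ` is `1`-Lipschitz for the sup norm, so the
bounded functions whose averages converge form a set closed under uniform limits. By the AMS
hypothesis it contains the indicators of measurable sets, hence all simple functions, and every
bounded measurable `g` is a uniform limit of the simple functions `ε ⌊g / ε⌋`.
-/

open MeasureTheory Filter Finset Topology

theorem cauchySeq_of_forall_dist_le_of_cauchySeq {α β : Type*} [PseudoMetricSpace α]
    [Nonempty β] [SemilatticeSup β] {u : β → α}
    (h : ∀ ε > 0, ∃ v : β → α, (∀ n, dist (u n) (v n) ≤ ε) ∧ CauchySeq v) : CauchySeq u := by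
  rw [Metric.cauchySeq_iff]
  intro ε hε
  obtain ⟨v, huv, hv⟩ := h (ε / 4) (by positivity)
  obtain ⟨N, hN⟩ := Metric.cauchySeq_iff.1 hv (ε / 4) (by positivity)
  refine ⟨N, fun m hm n hn => ?_⟩
  calc dist (u m) (u n) ≤ dist (u m) (v m) + dist (v m) (v n) + dist (v n) (u n) :=
        dist_triangle4 _ _ _ _
    _ < ε := by linarith [huv m, hN m hm n hn, dist_comm (v n) (u n) ▸ huv n]

noncomputable def cesaroMean (a : ℕ → ℝ) (n : ℕ) : ℝ :=
  1 / (n : ℝ) * ∑ i ∈ range n, a i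

theorem cesaroMean_sum_mul {ι : Type*} (s : Finset ι) (a : ι → ℕ → ℝ) (c : ι → ℝ) :
    cesaroMean (fun i => ∑ j ∈ s, a j i * c j) = fun n => ∑ j ∈ s, cesaroMean (a j) n * c j := by
  funext n
  rw [cesaroMean, sum_comm, mul_sum]
  refine sum_congr rfl fun j _ => ?_
  rw [cesaroMean, ← sum_mul, mul_assoc]

theorem abs_cesaroMean_sub_le {a b : ℕ → ℝ} {ε : ℝ} (h : ∀ i, |a i - b i| ≤ ε) (n : ℕ) :
    |cesaroMean a n - cesaroMean b n| ≤ ε := by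
  rcases n.eq_zero_or_pos with rfl | hn
  · simpa [cesaroMean] using (abs_nonneg _).trans (h 0)
  have hn' : (0 : ℝ) < n := by exact_mod_cast hn
  calc |cesaroMean a n - cesaroMean b n| = 1 / n * |∑ i ∈ range n, (a i - b i)| := by
        rw [cesaroMean, cesaroMean, ← mul_sub, ← sum_sub_distrib, abs_mul,
          abs_of_pos (by positivity : (0 : ℝ) < 1 / n)]
    _ ≤ 1 / n * (n * ε) := by
        gcongr
        calc |∑ i ∈ range n, (a i - b i)| ≤ ∑ i ∈ range n, |a i - b i| := abs_sum_le_sum_abs _ _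
          _ ≤ ∑ _i ∈ range n, ε := sum_le_sum fun i _ => h i
          _ = n * ε := by rw [sum_const, card_range, nsmul_eq_mul]
    _ = ε := by field_simp

theorem cauchySeq_cesaroMean_of_forall_approx {a : ℕ → ℝ}
    (h : ∀ ε > 0, ∃ b : ℕ → ℝ, (∀ i, |a i - b i| ≤ ε) ∧ CauchySeq (cesaroMean b)) :
    CauchySeq (cesaroMean a) :=
  cauchySeq_of_forall_dist_le_of_cauchySeq fun ε hε => by
    obtain ⟨b, hab, hb⟩ := h ε hε
    exact ⟨cesaroMean b, fun n => abs_cesaroMean_sub_le hab n, hb⟩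

section

variable {X : Type*} [MeasurableSpace X]

theorem exists_simpleFunc_abs_sub_le {g : X → ℝ} (hg : Measurable g) {C : ℝ}
    (hC : ∀ x, |g x| ≤ C) {ε : ℝ} (hε : 0 < ε) : ∃ f : SimpleFunc X ℝ, ∀ x, |g x - f x| ≤ ε := by
  have hrange : (Set.range fun x => ⌊g x / ε⌋).Finite :=
    (Set.finite_Icc ⌊-C / ε⌋ ⌊C / ε⌋).subset <| Set.range_subset_iff.2 fun x =>
      ⟨Int.floor_mono <| div_le_div_of_nonneg_right (neg_le_of_abs_le (hC x)) hε.le,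
        Int.floor_mono <| div_le_div_of_nonneg_right (le_of_abs_le (hC x)) hε.le⟩
  let k : SimpleFunc X ℤ :=
    ⟨fun x => ⌊g x / ε⌋, fun n => (hg.div_const ε).floor (measurableSet_singleton n), hrange⟩
  refine ⟨k.map fun n : ℤ => ε * n, fun x => ?_⟩
  have hfract : g x - ε * ⌊g x / ε⌋ = ε * Int.fract (g x / ε) := by
    rw [← Int.self_sub_floor]; field_simp
  rw [SimpleFunc.map_apply, show k x = ⌊g x / ε⌋ from rfl, hfract,
    abs_of_nonneg (mul_nonneg hε.le (Int.fract_nonneg _))]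
  exact mul_le_of_le_one_right hε.le (Int.fract_lt_one _).le

variable {Y : Type*} [MeasurableSpace Y] (μ : Measure X)

theorem integral_comp_simpleFunc [IsFiniteMeasure μ] {φ : X → Y} (hφ : Measurable φ)
    (f : SimpleFunc Y ℝ) : ∫ x, f (φ x) ∂μ = ∑ y ∈ f.range, μ.real (φ ⁻¹' (f ⁻¹' {y})) * y := by
  rw [← integral_map hφ.aemeasurable f.aestronglyMeasurable,
    f.integral_eq_sum (f.integrable_of_isFiniteMeasure)]
  refine sum_congr rfl fun y _ => ?_
  rw [map_measureReal_apply hφ (f.measurableSet_preimage _), smul_eq_mul]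

theorem integral_indicator_one_comp {φ : X → Y} (hφ : Measurable φ) {A : Set Y}
    (hA : MeasurableSet A) : ∫ x, A.indicator 1 (φ x) ∂μ = μ.real (φ ⁻¹' A) := by
  simp_rw [← Set.indicator_comp_right, Pi.one_comp]
  exact integral_indicator_one (hφ hA)

theorem abs_integral_sub_le_of_forall_abs_sub_le [IsProbabilityMeasure μ] {f g : X → ℝ}
    (hf : Integrable f μ) (hg : Integrable g μ) {ε : ℝ} (h : ∀ x, |f x - g x| ≤ ε) :
    |∫ x, f x ∂μ - ∫ x, g x ∂μ| ≤ ε := by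
  rw [← integral_sub hf hg]
  simpa using norm_integral_le_of_norm_le_const (μ := μ)
    (ae_of_all _ fun x => (Real.norm_eq_abs (f x - g x)).trans_le (h x))

/-- `μ` is asymptotically mean stationary for `T`. -/
def IsAMS (T : X → X) : Prop :=
  ∀ A : Set X, MeasurableSet A →
    ∃ L, Tendsto (cesaroMean fun i => μ.real (T^[i] ⁻¹' A)) atTop (𝓝 L)

variable {μ} {T : X → X}

theorem IsAMS.exists_tendsto_cesaroMean_integral_simpleFunc [IsFiniteMeasure μ] (h : IsAMS μ T)
    (hT : Measurable T) (f : SimpleFunc X ℝ) :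
    ∃ L, Tendsto (cesaroMean fun i => ∫ x, f (T^[i] x) ∂μ) atTop (𝓝 L) := by
  choose L hL using fun y : ℝ => h (f ⁻¹' {y}) (f.measurableSet_preimage _)
  refine ⟨∑ y ∈ f.range, L y * y, ?_⟩
  simp_rw [integral_comp_simpleFunc μ (hT.iterate _), cesaroMean_sum_mul]
  exact tendsto_finsetSum _ fun y _ => (hL y).mul_const y

theorem IsAMS.exists_tendsto_cesaroMean_integral [IsProbabilityMeasure μ] (h : IsAMS μ T)
    (hT : Measurable T) {g : X → ℝ} (hg : Measurable g) {C : ℝ} (hC : ∀ x, |g x| ≤ C) :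
    ∃ L, Tendsto (cesaroMean fun i => ∫ x, g (T^[i] x) ∂μ) atTop (𝓝 L) := by
  refine cauchySeq_tendsto_of_complete <| cauchySeq_cesaroMean_of_forall_approx fun ε hε => ?_
  obtain ⟨f, hgf⟩ := exists_simpleFunc_abs_sub_le hg hC hε
  obtain ⟨L, hL⟩ := h.exists_tendsto_cesaroMean_integral_simpleFunc hT f
  refine ⟨_, fun i => abs_integral_sub_le_of_forall_abs_sub_le μ ?_ ?_ fun x => hgf _, hL.cauchySeq⟩
  · exact .of_bound (hg.comp (hT.iterate i)).aestronglyMeasurable C (ae_of_all _ fun x => hC _)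
  · exact (f.comp _ (hT.iterate i)).integrable_of_isFiniteMeasure

end

theorem ams_iff_bounded_measurable_averages_converge
    {X : Type*} [MeasurableSpace X] (T : X → X) (hT : Measurable T)
    (μ : Measure X) [IsProbabilityMeasure μ] :
    (∀ A : Set X, MeasurableSet A → ∃ L : ℝ,
      Tendsto (fun n : ℕ => (1 / (n : ℝ)) * ∑ i ∈ Finset.range n, (μ (T^[i] ⁻¹' A)).toReal)
        atTop (nhds L)) ↔
    (∀ g : X → ℝ, Measurable g → (∃ C : ℝ, ∀ x, |g x| ≤ C) → ∃ L : ℝ,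
      Tendsto (fun n : ℕ => (1 / (n : ℝ)) * ∑ i ∈ Finset.range n, ∫ x, g (T^[i] x) ∂μ)
        atTop (nhds L)) := by
  change IsAMS μ T ↔ ∀ g : X → ℝ, Measurable g → (∃ C : ℝ, ∀ x, |g x| ≤ C) →
    ∃ L, Tendsto (cesaroMean fun i => ∫ x, g (T^[i] x) ∂μ) atTop (𝓝 L)
  refine ⟨fun h g hg ⟨C, hC⟩ => h.exists_tendsto_cesaroMean_integral hT hg hC, fun h A hA => ?_⟩
  have hbound : ∀ x, |A.indicator (1 : X → ℝ) x| ≤ 1 := fun x => by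
    by_cases hx : x ∈ A <;> simp [hx]
  simpa only [integral_indicator_one_comp μ (hT.iterate _) hA]
    using h (A.indicator 1) (measurable_const.indicator hA) ⟨1, hbound⟩
end

section
/- Let T : X → X be measurable and γ : X → {1,...,N} measurable. If a probability measure μ is T_γ-AMS (where T_γ(x) = T^{γ(x)}(x)) with T_γ-stationary mean m, and if m is T-AMS, then any measurable set A with T⁻¹A = A and \bar{m}(A) = 0 (where \bar{m} is the T-stationary mean of m) satisfies μ(A) = 0. -/
open MeasureTheory Filter Finset

lemma cesaro_const (c : ℝ) :
    Tendsto (fun n : ℕ => (1 / (n : ℝ)) * ∑ _i ∈ Finset.range n, c) atTop (nhds c) := by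
  have h : ∀ᶠ n : ℕ in atTop, (1 / (n : ℝ)) * ∑ _i ∈ Finset.range n, c = c := by
    filter_upwards [eventually_ge_atTop 1] with n hn
    have hn' : (n : ℝ) ≠ 0 := by positivity
    rw [Finset.sum_const, Finset.card_range, nsmul_eq_mul]
    field_simp
  exact Tendsto.congr' (h.mono fun n hn => hn.symm) tendsto_const_nhds

theorem null_invariant_sets_transfer
    {X : Type*} [MeasurableSpace X] (T : X → X) (hT : Measurable T)
    (N : ℕ) (hN : 1 ≤ N)
    (γ : X → ℕ) (hγ : Measurable γ) (hγ1 : ∀ x, 1 ≤ γ x) (hγN : ∀ x, γ x ≤ N)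
    (μ m mbar : Measure X)
    [IsProbabilityMeasure μ] [IsProbabilityMeasure m] [IsProbabilityMeasure mbar]
    -- `m` is the `T_γ`-stationary mean of the `T_γ`-AMS measure `μ`:
    (hmeanγ : ∀ A : Set X, MeasurableSet A →
      Tendsto (fun n : ℕ =>
          (1 / (n : ℝ)) * ∑ i ∈ Finset.range n, (μ ((fun y => T^[γ y] y)^[i] ⁻¹' A)).toReal)
        atTop (nhds (m A).toReal))
    (hstatγ : ∀ A : Set X, MeasurableSet A → m ((fun y => T^[γ y] y) ⁻¹' A) = m A)
    -- `mbar` is the `T`-stationary mean of the `T`-AMS measure `m`: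
    (hmeanT : ∀ A : Set X, MeasurableSet A →
      Tendsto (fun n : ℕ => (1 / (n : ℝ)) * ∑ i ∈ Finset.range n, (m (T^[i] ⁻¹' A)).toReal)
        atTop (nhds (mbar A).toReal))
    (hstatT : ∀ A : Set X, MeasurableSet A → mbar (T ⁻¹' A) = mbar A)
    (A : Set X) (hA : MeasurableSet A) (hinv : T ⁻¹' A = A) (hnull : mbar A = 0) :
    μ A = 0 := by
  -- A is invariant under all iterates of T
  have hiter : ∀ k : ℕ, T^[k] ⁻¹' A = A := by
    intro k
    induction k with
    | zero => simp
    | succ k ih =>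
      rw [Function.iterate_succ, Set.preimage_comp, ih, hinv]
  -- A is invariant under T_γ
  have hTγ : (fun y => T^[γ y] y) ⁻¹' A = A := by
    ext y
    have := hiter (γ y)
    constructor
    · intro hy
      have : y ∈ T^[γ y] ⁻¹' A := hy
      rwa [hiter (γ y)] at this
    · intro hy
      show T^[γ y] y ∈ A
      have : y ∈ T^[γ y] ⁻¹' A := by rw [hiter (γ y)]; exact hy
      exact this
  have hTγiter : ∀ k : ℕ, (fun y => T^[γ y] y)^[k] ⁻¹' A = A := by
    intro k
    induction k with
    | zero => simp
    | succ k ih =>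
      rw [Function.iterate_succ, Set.preimage_comp, ih, hTγ]
  -- m A = mbar A = 0
  have h1 : Tendsto (fun n : ℕ => (1 / (n : ℝ)) * ∑ _i ∈ Finset.range n, (m A).toReal)
      atTop (nhds (mbar A).toReal) := by
    have := hmeanT A hA
    refine this.congr ?_
    intro n
    congr 1
    exact Finset.sum_congr rfl fun i _ => by rw [hiter i]
  have hmA : (m A).toReal = (mbar A).toReal :=
    tendsto_nhds_unique (cesaro_const _) h1
  have hmA0 : m A = 0 := by
    have := hmA
    rw [hnull] at this
    simpa using (ENNReal.toReal_eq_zero_iff _).mp (by simpa using this) |>.resolve_right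
      (measure_ne_top m A)
  -- μ A = m A = 0
  have h2 : Tendsto (fun n : ℕ => (1 / (n : ℝ)) * ∑ _i ∈ Finset.range n, (μ A).toReal)
      atTop (nhds (m A).toReal) := by
    have := hmeanγ A hA
    refine this.congr ?_
    intro n
    congr 1
    exact Finset.sum_congr rfl fun i _ => by rw [hTγiter i]
  have hμA : (μ A).toReal = (m A).toReal :=
    tendsto_nhds_unique (cesaro_const _) h2
  rw [hmA0] at hμA
  simpa using (ENNReal.toReal_eq_zero_iff _).mp (by simpa using hμA) |>.resolve_right
    (measure_ne_top μ A)
end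

section
/- Define a finite-state coder with state space {0,1,...,N−1}, state update g_s(u, s) = u − 1 if s = 0 and s − 1 otherwise, and output g_o(u, s) = 1 if s = 0 and 0 otherwise, driven by an input sequence u : ℕ → {1,...,N} (indexed from 1) starting in state s₁ = 0. Then the output sequence z : ℕ → {0,1} (indexed from 0) satisfies: z_i = 1 if and only if i belongs to the range of the sequence ζ defined by ζ₀ = 0 and ζ_{n+1} = ζₙ + u_{ζₙ + 1}. -/
theorem finite_state_coder_marks_parsing_boundaries
    (N : ℕ) (hN : 1 ≤ N)
    (u : ℕ → ℕ) (hu1 : ∀ k, 1 ≤ k → 1 ≤ u k) (huN : ∀ k, 1 ≤ k → u k ≤ N)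
    (s : ℕ → ℕ) (hs1 : s 1 = 0)
    (hs : ∀ k, 1 ≤ k → s (k + 1) = if s k = 0 then u k - 1 else s k - 1)
    (z : ℕ → ℕ) (hz : ∀ k, 1 ≤ k → z k = if s k = 0 then 1 else 0)
    (ζ : ℕ → ℕ) (hζ0 : ζ 0 = 0) (hζ : ∀ n, ζ (n + 1) = ζ n + u (ζ n + 1)) :
    ∀ k, 1 ≤ k → (z k = 1 ↔ ∃ n, ζ n = k - 1) := by
  have hζmono : StrictMono ζ := by
    apply strictMono_nat_of_lt_succ
    intro n
    have h1 : 1 ≤ u (ζ n + 1) := hu1 _ (by omega)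
    have := hζ n
    omega
  have key : ∀ k, 1 ≤ k →
      (∃ n, ζ n = k - 1 ∧ s k = 0) ∨
      (∃ n, ζ n < k - 1 ∧ k - 1 < ζ (n+1) ∧ s k = ζ (n+1) + 1 - k) := by
    intro k hk
    induction k with
    | zero => omega
    | succ k ih =>
      rcases Nat.eq_or_lt_of_le hk with h1 | h1
      · left
        refine ⟨0, by omega, ?_⟩
        have hk0 : k = 0 := by omega
        rw [hk0]; exact hs1
      · have hk1 : 1 ≤ k := by omega
        rcases ih hk1 with ⟨n, hn, hs0⟩ | ⟨n, hn1, hn2, hsk⟩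
        · have hsk1 : s (k+1) = u k - 1 := by rw [hs k hk1, if_pos hs0]
          have huk : 1 ≤ u k := hu1 k hk1
          have hζn1 := hζ n
          have hkeq : ζ n + 1 = k := by omega
          rw [hkeq] at hζn1
          by_cases hcase : u k = 1
          · left; exact ⟨n+1, by omega, by omega⟩
          · right; exact ⟨n, by omega, by omega, by omega⟩
        · have hsne : s k ≠ 0 := by omega
          have hsk1 : s (k+1) = s k - 1 := by rw [hs k hk1, if_neg hsne]
          by_cases hcase : k = ζ (n+1)
          · left; exact ⟨n+1, by omega, by omega⟩
          · right; exact ⟨n, by omega, by omega, by omega⟩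
  intro k hk
  rw [hz k hk]
  constructor
  · intro h
    have hs0 : s k = 0 := by by_contra hc; simp [hc] at h
    rcases key k hk with ⟨n, hn, _⟩ | ⟨n, _, hn2, hsk⟩
    · exact ⟨n, hn⟩
    · omega
  · rintro ⟨m, hm⟩
    rcases key k hk with ⟨n, hn, hs0⟩ | ⟨n, hn1, hn2, hsk⟩
    · simp [hs0]
    · rcases lt_or_ge m (n+1) with h | h
      · have : ζ m ≤ ζ n := hζmono.monotone (by omega)
        omega
      · have : ζ (n+1) ≤ ζ m := hζmono.monotone h
        omega
end
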